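/- arXiv:1809.10655 — 3 statements merged into one kernel-verified Lean document; each statement's English description precedes it below -/
import Mathlib

section
/- For any global state σ, the function pfailvec(σ,·) is a discrete probability distribution over the set F_σ of possible failure vectors of σ: ∑_{F ∈ F_σ} pfailvec(σ, F) = 1. -/
/-- `alphaF T pert ref σ F Φ` is the number of oscillators with phase greater
than `Φ` perceived to be firing by oscillators with phase `Φ`, in global state
`σ` with failure vector `F` (entries `none` represent ★).  It is computed
downwards from phase `T` (where it is `0`). -/
def alphaF (T : ℕ) (pert ref : ℕ → ℕ → ℕ) (σ : ℕ → ℕ) (F : ℕ → Option ℕ) (Φ : ℕ) : ℕ :=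
  if h : T ≤ Φ then 0
  else
    let a := alphaF T pert ref σ F (Φ + 1)
    match F (Φ + 1) with
    | none => a
    | some f => if T < 1 + ref (Φ + 1) (pert (Φ + 1) a) then a + σ (Φ + 1) - f else a
termination_by T - Φ
decreasing_by omega

/-- `update^Φ(σ,F) = 1 + ref(Φ, pert(Φ, α^Φ(σ,F), ε))`. -/
def updateF (T : ℕ) (pert ref : ℕ → ℕ → ℕ) (σ : ℕ → ℕ) (F : ℕ → Option ℕ) (Φ : ℕ) : ℕ :=
  1 + ref Φ (pert Φ (alphaF T pert ref σ F Φ))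

/-- The phase transition function: firing phases are mapped to `1`, all other
phases to their updated value. -/
def tauF (T : ℕ) (pert ref : ℕ → ℕ → ℕ) (σ : ℕ → ℕ) (F : ℕ → Option ℕ) (Φ : ℕ) : ℕ :=
  if T < updateF T pert ref σ F Φ then 1 else updateF T pert ref σ F Φ

/-- The successor of global state `σ` under failure vector `F`: phase `Φ`
receives the total count of the phases mapped to `Φ` by `tauF`. -/
def sucF (T : ℕ) (pert ref : ℕ → ℕ → ℕ) (σ : ℕ → ℕ) (F : ℕ → Option ℕ) : ℕ → ℕ :=
  fun Φ => ∑ Ψ ∈ Finset.Icc 1 T, if tauF T pert ref σ F Ψ = Φ then σ Ψ else 0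

/-- The set of possible failure vectors of a global state `σ`: at every phase
`Φ ∈ {1,…,T}` that fires, any number `f ≤ k_Φ` of broadcast failures may occur
(`F Φ = some f`); at non-firing phases the entry is ★ (`F Φ = none`), and
entries outside `{1,…,T}` are ★. -/
def failSet (T : ℕ) (pert ref : ℕ → ℕ → ℕ) (σ : ℕ → ℕ) : Set (ℕ → Option ℕ) :=
  { F | (∀ Φ, 1 ≤ Φ → Φ ≤ T →
          ((T < updateF T pert ref σ F Φ → ∃ f, F Φ = some f ∧ f ≤ σ Φ) ∧
           (¬ T < updateF T pert ref σ F Φ → F Φ = none))) ∧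
        (∀ Φ, Φ = 0 ∨ T < Φ → F Φ = none) }

/-- `pfail(k,f) = μ^f (1−μ)^(k−f) C(k,f)`. -/
def pfailR (μ : ℝ) (k f : ℕ) : ℝ := μ ^ f * (1 - μ) ^ (k - f) * (k.choose f : ℝ)

/-- `pfailvec(σ,F) = ∏_{Φ=1}^T pfail(k_Φ, f_Φ)`, with factor `1` for ★ entries. -/
def pfailvecR (μ : ℝ) (T : ℕ) (σ : ℕ → ℕ) (F : ℕ → Option ℕ) : ℝ :=
  ∏ Φ ∈ Finset.Icc 1 T, (match F Φ with | some f => pfailR μ (σ Φ) f | none => 1)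


/-! The failure vectors of `σ` are chosen phase by phase, from `T` down to `1`, and the entries
admissible at phase `Φ` depend only on the entries already chosen above `Φ`. Summing the product
weight over this tree of choices therefore peels off one phase at a time, and at every phase the
weights of the admissible entries sum to `1`: at a firing phase this is the binomial theorem for
`(μ + (1 - μ)) ^ k`, otherwise the only entry is ★, of weight `1`. -/

open Finset Function

section ChoiceTree

variable {α R : Type*} (A : (ℕ → α) → ℕ → Finset α)

open Classical in
/-- The paper's recursive `fail_T`, with the admissible entries at each phase abstracted to `A`. -/
noncomputable def choiceTree : ℕ → (ℕ → α) → Finset (ℕ → α)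
  | 0, G => {G}
  | m + 1, G => (A G (m + 1)).biUnion fun x => choiceTree m (update G (m + 1) x)

variable {A}

theorem apply_eq_of_mem_choiceTree {m : ℕ} {G F : ℕ → α} (hF : F ∈ choiceTree A m G)
    {Φ : ℕ} (hΦ : m < Φ) : F Φ = G Φ := by
  classical
  induction m generalizing G with
  | zero => rw [choiceTree, mem_singleton] at hF; rw [hF]
  | succ m ih =>
    obtain ⟨x, -, hFx⟩ := mem_biUnion.mp hF
    rw [ih hFx (by omega), update_of_ne (by omega)]

theorem sum_prod_choiceTree [CommSemiring R] {w : ℕ → α → R}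
    (hw : ∀ F Φ, ∑ x ∈ A F Φ, w Φ x = 1) (m : ℕ) (G : ℕ → α) :
    ∑ F ∈ choiceTree A m G, ∏ Φ ∈ Icc 1 m, w Φ (F Φ) = 1 := by
  classical
  induction m generalizing G with
  | zero => simp [choiceTree]
  | succ m ih =>
    have last_eq {x F} (hF : F ∈ choiceTree A m (update G (m + 1) x)) : F (m + 1) = x := by
      rw [apply_eq_of_mem_choiceTree hF (by omega), update_self]
    rw [choiceTree, sum_biUnion]
    · calc ∑ x ∈ A G (m + 1), ∑ F ∈ choiceTree A m (update G (m + 1) x),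
              ∏ Φ ∈ Icc 1 (m + 1), w Φ (F Φ)
          = ∑ x ∈ A G (m + 1), w (m + 1) x := by
            refine sum_congr rfl fun x _ => ?_
            rw [← mul_one (w (m + 1) x), ← ih (update G (m + 1) x), mul_sum]
            refine sum_congr rfl fun F hF => ?_
            rw [prod_Icc_succ_top (by omega), last_eq hF, mul_comm]
        _ = 1 := hw G (m + 1)
    · intro x _ y _ hxy
      exact disjoint_left.mpr fun F hx hy => hxy ((last_eq hx).symm.trans (last_eq hy))

theorem forall_notMem_Icc_eq_update_iff {F G : ℕ → α} {m : ℕ} {x : α} :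
    (∀ Φ ∉ Icc 1 m, F Φ = update G (m + 1) x Φ) ↔
      F (m + 1) = x ∧ ∀ Φ ∉ Icc 1 (m + 1), F Φ = G Φ := by
  simp only [mem_Icc, not_and_or, not_le]
  constructor
  · intro h
    refine ⟨by simpa using h (m + 1) (by omega), fun Φ hΦ => ?_⟩
    rw [h Φ (by omega), update_of_ne (by omega)]
  · rintro ⟨rfl, h⟩ Φ hΦ
    by_cases hm : Φ = m + 1
    · rw [hm, update_self]
    · rw [h Φ (by omega), update_of_ne hm]

theorem mem_choiceTree (hA : ∀ F F' Φ, (∀ Ψ, Φ < Ψ → F Ψ = F' Ψ) → A F Φ = A F' Φ)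
    {m : ℕ} {G F : ℕ → α} :
    F ∈ choiceTree A m G ↔ (∀ Φ ∈ Icc 1 m, F Φ ∈ A F Φ) ∧ ∀ Φ ∉ Icc 1 m, F Φ = G Φ := by
  classical
  induction m generalizing G with
  | zero => simp [choiceTree, funext_iff]
  | succ m ih =>
    have agree_above (hout : ∀ Φ ∉ Icc 1 (m + 1), F Φ = G Φ) : A F (m + 1) = A G (m + 1) :=
      hA F G (m + 1) fun Ψ hΨ => hout Ψ (by simp only [mem_Icc]; omega)
    have split_top : (∀ Φ ∈ Icc 1 (m + 1), F Φ ∈ A F Φ) ↔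
        F (m + 1) ∈ A F (m + 1) ∧ ∀ Φ ∈ Icc 1 m, F Φ ∈ A F Φ := by
      rw [← insert_Icc_right_eq_Icc_add_one (by omega), forall_mem_insert]
    simp only [choiceTree, mem_biUnion, ih, forall_notMem_Icc_eq_update_iff, split_top]
    constructor
    · rintro ⟨_, hx, hbelow, rfl, hout⟩
      exact ⟨⟨agree_above hout ▸ hx, hbelow⟩, hout⟩
    · rintro ⟨⟨hx, hbelow⟩, hout⟩
      exact ⟨F (m + 1), agree_above hout ▸ hx, hbelow, rfl, hout⟩

end ChoiceTree

theorem sum_range_pfailR (μ : ℝ) (k : ℕ) : ∑ f ∈ range (k + 1), pfailR μ k f = 1 := by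
  have binomial := add_pow μ (1 - μ) k
  rw [add_sub_cancel, one_pow] at binomial
  exact binomial.symm

section FailureVectors

variable (T : ℕ) (pert ref : ℕ → ℕ → ℕ) (σ : ℕ → ℕ)

theorem alphaF_congr {F F' : ℕ → Option ℕ} {Φ : ℕ} (h : ∀ Ψ, Φ < Ψ → F Ψ = F' Ψ) :
    alphaF T pert ref σ F Φ = alphaF T pert ref σ F' Φ := by
  rw [alphaF.eq_def T pert ref σ F Φ, alphaF.eq_def T pert ref σ F' Φ]
  split_ifs with hΦ
  · rfl
  · rw [alphaF_congr (fun Ψ hΨ => h Ψ (by omega)), h (Φ + 1) (by omega)]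
termination_by T - Φ

theorem updateF_congr {F F' : ℕ → Option ℕ} {Φ : ℕ} (h : ∀ Ψ, Φ < Ψ → F Ψ = F' Ψ) :
    updateF T pert ref σ F Φ = updateF T pert ref σ F' Φ := by
  rw [updateF, updateF, alphaF_congr T pert ref σ h]

def failChoices (F : ℕ → Option ℕ) (Φ : ℕ) : Finset (Option ℕ) :=
  if T < updateF T pert ref σ F Φ then (range (σ Φ + 1)).map .some else {none}

theorem failChoices_congr {F F' : ℕ → Option ℕ} {Φ : ℕ} (h : ∀ Ψ, Φ < Ψ → F Ψ = F' Ψ) :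
    failChoices T pert ref σ F Φ = failChoices T pert ref σ F' Φ := by
  rw [failChoices, failChoices, updateF_congr T pert ref σ h]

theorem mem_failChoices {F : ℕ → Option ℕ} {Φ : ℕ} :
    F Φ ∈ failChoices T pert ref σ F Φ ↔
      (T < updateF T pert ref σ F Φ → ∃ f, F Φ = some f ∧ f ≤ σ Φ) ∧
      (¬ T < updateF T pert ref σ F Φ → F Φ = none) := by
  unfold failChoices
  split_ifs with hfire <;> simp [hfire, eq_comm, and_comm]

theorem failSet_eq_choiceTree :
    failSet T pert ref σ = choiceTree (failChoices T pert ref σ) T fun _ => none := by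
  ext F
  rw [Finset.mem_coe, mem_choiceTree fun F F' Φ => failChoices_congr T pert ref σ]
  have outside (Φ : ℕ) : Φ = 0 ∨ T < Φ ↔ ¬(1 ≤ Φ ∧ Φ ≤ T) := by omega
  simp only [failSet, Set.mem_ofPred_eq, mem_failChoices, mem_Icc, and_imp, outside]

def failWeight (μ : ℝ) (Φ : ℕ) : Option ℕ → ℝ
  | some f => pfailR μ (σ Φ) f
  | none => 1

theorem sum_failWeight_failChoices (μ : ℝ) (F : ℕ → Option ℕ) (Φ : ℕ) :
    ∑ x ∈ failChoices T pert ref σ F Φ, failWeight σ μ Φ x = 1 := by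
  unfold failChoices
  split_ifs
  · rw [sum_map]
    exact sum_range_pfailR μ (σ Φ)
  · rw [sum_singleton]
    rfl

end FailureVectors

theorem pfailvec_distribution_general (T : ℕ) (pert ref : ℕ → ℕ → ℕ) (σ : ℕ → ℕ) (μ : ℝ) :
    ∑' F : failSet T pert ref σ, pfailvecR μ T σ F = 1 := by
  rw [failSet_eq_choiceTree, Finset.tsum_subtype']
  exact sum_prod_choiceTree (sum_failWeight_failChoices T pert ref σ μ) T _

/-- For any global state σ, pfailvec(σ,·) is a discrete probability distribution
over the set of possible failure vectors of σ. -/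
theorem pfailvec_distribution (T N : ℕ) (pert ref : ℕ → ℕ → ℕ) (σ : ℕ → ℕ) (μ : ℝ)
    (hT : 0 < T) (hμ0 : 0 ≤ μ) (hμ1 : μ ≤ 1)
    (hout : ∀ Φ, Φ = 0 ∨ T < Φ → σ Φ = 0)
    (hsum : ∑ Φ ∈ Finset.Icc 1 T, σ Φ = N) :
    ∑' F : failSet T pert ref σ, pfailvecR μ T σ F = 1 :=
  pfailvec_distribution_general T pert ref σ μ
end

section
/- Let D be a DTMC in which every non-firing state deterministically (with probability 1) transitions to its unique successor, and let D′ be its reduction obtained by collapsing maximal chains of deterministic transitions. Then for any target set of firing states, the probability (from the initial state) of eventually reaching the target set is equal in D and D′. -/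
/-!
Hitting probabilities are the least solution of `h = 1` on the target and
`h s = ∑ q, P s q * h q` elsewhere. Let `π` send `ι` to itself and every other state to the
firing state that ends its deterministic chain. A deterministic chain passes its hitting
probability on unchanged, so `h_D ∘ π = h_D`, and the rows of `D′` at `ι` and at the firing
states are the images of those of `D` under `π`. Hence `h_D` is a supersolution for `D′` and
`h_D′ ∘ π` is one for `D`, and minimality gives both inequalities.
-/

variable {Q : Type}

/-- The measure of the finite path `f 0, f 1, …, f n`: the product of the
transition probabilities of its consecutive steps. -/
def pathMeas (P : Q → Q → ℝ) (f : ℕ → Q) (n : ℕ) : ℝ :=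
  ∏ i ∈ Finset.range n, P (f i) (f (i + 1))

/-- A canonical encoding of a finite path from `ι` that hits the target set
`synch` for the first time at step `n = p.1`: the path is constant after `n`. -/
def FirstHit (ι : Q) (synch : Set Q) (p : ℕ × (ℕ → Q)) : Prop :=
  p.2 0 = ι ∧ p.2 p.1 ∈ synch ∧ (∀ m < p.1, p.2 m ∉ synch) ∧
    ∀ m, p.1 ≤ m → p.2 m = p.2 p.1

/-- The probability, starting from `ι`, of eventually reaching `synch`: the sum
of the measures of all first-hitting finite paths. -/
noncomputable def reachProb (P : Q → Q → ℝ) (ι : Q) (synch : Set Q) : ℝ :=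
  ∑' p : { p : ℕ × (ℕ → Q) // FirstHit ι synch p }, pathMeas P p.1.2 p.1.1

/-- The reward accumulated along the finite path `f 0, …, f n` (excluding the
state reward of the final state). -/
def pathRew (rs : Q → ℝ) (rt : Q → Q → ℝ) (f : ℕ → Q) (n : ℕ) : ℝ :=
  ∑ i ∈ Finset.range n, (rs (f i) + rt (f i) (f (i + 1)))

/-- The expected reward accumulated until first reaching `synch` from `ι`:
the path-measure-weighted sum of accumulated rewards over all first-hitting
paths when `synch` is reached almost surely, and `∞` otherwise. -/
noncomputable def expReward (P : Q → Q → ℝ) (rs : Q → ℝ) (rt : Q → Q → ℝ)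
    (ι : Q) (synch : Set Q) : EReal :=
  if reachProb P ι synch = 1 then
    ((∑' p : { p : ℕ × (ℕ → Q) // FirstHit ι synch p },
        pathMeas P p.1.2 p.1.1 * pathRew rs rt p.1.2 p.1.1 : ℝ) : EReal)
  else ⊤

open scoped ENNReal

noncomputable def pathMeasENNReal (P : Q → Q → ℝ) (f : ℕ → Q) (n : ℕ) : ℝ≥0∞ :=
  ∏ i ∈ Finset.range n, ENNReal.ofReal (P (f i) (f (i + 1)))

/-- `n = ⊤` is allowed so that the untruncated hitting probability obeys the one-step recursion
`hitProbWithin_succ` too. -/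
noncomputable def hitProbWithin (P : Q → Q → ℝ) (S : Set Q) (n : ℕ∞) (s : Q) : ℝ≥0∞ :=
  ∑' p : { p : ℕ × (ℕ → Q) // FirstHit s S p },
    if (p.1.1 : ℕ∞) ≤ n then pathMeasENNReal P p.1.2 p.1.1 else 0

def consPath (s : Q) (f : ℕ → Q) : ℕ → Q
  | 0 => s
  | i + 1 => f i

theorem FirstHit.cons {S : Set Q} {s q : Q} {p : ℕ × (ℕ → Q)} (hs : s ∉ S)
    (hp : FirstHit q S p) : FirstHit s S (p.1 + 1, consPath s p.2) := by
  obtain ⟨-, hmem, hpre, hconst⟩ := hp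
  refine ⟨rfl, hmem, fun m hm => ?_, fun m hm => ?_⟩
  · cases m with
    | zero => exact hs
    | succ m => exact hpre m (by omega)
  · cases m with
    | zero => omega
    | succ m => exact hconst m (by omega)

noncomputable def firstHitConsEquiv (S : Set Q) (s : Q) (hs : s ∉ S) :
    (Σ q : Q, { p : ℕ × (ℕ → Q) // FirstHit q S p }) ≃ { p : ℕ × (ℕ → Q) // FirstHit s S p } :=
  Equiv.ofBijective (fun x => ⟨(x.2.1.1 + 1, consPath s x.2.1.2), x.2.2.cons hs⟩) <| by
    constructor
    · rintro ⟨q, ⟨⟨k, f⟩, hf⟩⟩ ⟨q', ⟨⟨k', f'⟩, hf'⟩⟩ h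
      obtain ⟨hk, hff⟩ := Prod.mk.inj (Subtype.mk.inj h)
      obtain rfl : k = k' := Nat.succ.inj hk
      obtain rfl : f = f' := funext fun i => congrFun hff (i + 1)
      obtain rfl : q = q' := hf.1.symm.trans hf'.1
      rfl
    · rintro ⟨⟨k, f⟩, h0, hmem, hpre, hconst⟩
      obtain ⟨k, rfl⟩ : ∃ k', k = k' + 1 :=
        Nat.exists_eq_succ_of_ne_zero fun hk => hs (by subst hk; exact h0 ▸ hmem)
      refine ⟨⟨f 1, ⟨(k, fun i => f (i + 1)), rfl, hmem,
        fun m hm => hpre (m + 1) (by omega), fun m hm => hconst (m + 1) (by omega)⟩⟩, ?_⟩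
      refine Subtype.ext (Prod.ext rfl (funext fun i => ?_))
      cases i with
      | zero => exact h0.symm
      | succ i => rfl

section HittingProbability

variable {P : Q → Q → ℝ} {S : Set Q} {s : Q}

theorem reachProb_eq_toReal_hitProbWithin (hP : ∀ a b, 0 ≤ P a b) (ι : Q) (S : Set Q) :
    reachProb P ι S = (hitProbWithin P S ⊤ ι).toReal := by
  have hmeas : ∀ f n, pathMeasENNReal P f n = ENNReal.ofReal (pathMeas P f n) := fun f n =>
    (ENNReal.ofReal_prod_of_nonneg fun i _ => hP _ _).symm
  simp only [hitProbWithin, le_top, if_true, hmeas]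
  rw [ENNReal.tsum_toReal_eq fun _ => ENNReal.ofReal_ne_top, reachProb]
  exact tsum_congr fun p => (ENNReal.toReal_ofReal (Finset.prod_nonneg fun i _ => hP _ _)).symm

theorem hitProbWithin_of_mem (hs : s ∈ S) (n : ℕ∞) : hitProbWithin P S n s = 1 := by
  have hconst : FirstHit s S ((0 : ℕ), fun _ => s) :=
    ⟨rfl, hs, fun m hm => absurd hm (Nat.not_lt_zero m), fun m _ => rfl⟩
  have hunique : ∀ p : { p : ℕ × (ℕ → Q) // FirstHit s S p }, p = ⟨_, hconst⟩ := by
    rintro ⟨⟨k, f⟩, hf0, -, hpre, hf⟩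
    obtain rfl : k = 0 := by_contra fun hk => hpre 0 (Nat.pos_of_ne_zero hk) (hf0 ▸ hs)
    exact Subtype.ext (Prod.ext rfl (funext fun m => (hf m m.zero_le).trans hf0))
  rw [hitProbWithin, tsum_eq_single _ fun p hp => (hp (hunique p)).elim]
  simp [pathMeasENNReal]

theorem hitProbWithin_zero (hs : s ∉ S) : hitProbWithin P S 0 s = 0 := by
  refine ENNReal.tsum_eq_zero.mpr fun ⟨⟨k, f⟩, hf0, hmem, _⟩ => if_neg fun hle => hs ?_
  obtain rfl : k = 0 := by exact_mod_cast nonpos_iff_eq_zero.mp hle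
  exact hf0 ▸ hmem

theorem hitProbWithin_mono (P : Q → Q → ℝ) (S : Set Q) (s : Q) :
    Monotone fun n => hitProbWithin P S n s := fun _ _ hnm =>
  ENNReal.tsum_le_tsum fun _ => by
    split_ifs with h₁ h₂
    exacts [le_rfl, absurd (h₁.trans hnm) h₂, zero_le, le_rfl]

theorem hitProbWithin_top_eq_iSup (P : Q → Q → ℝ) (S : Set Q) (s : Q) :
    hitProbWithin P S ⊤ s = ⨆ n : ℕ, hitProbWithin P S n s := by
  refine le_antisymm ?_ (iSup_le fun n => hitProbWithin_mono P S s le_top)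
  rw [hitProbWithin, ENNReal.tsum_eq_iSup_sum]
  refine iSup_le fun A => ?_
  let N := A.sup fun p => p.1.1
  calc ∑ p ∈ A, (if (p.1.1 : ℕ∞) ≤ ⊤ then pathMeasENNReal P p.1.2 p.1.1 else 0)
      = ∑ p ∈ A, (if (p.1.1 : ℕ∞) ≤ N then pathMeasENNReal P p.1.2 p.1.1 else 0) :=
        Finset.sum_congr rfl fun p hp => by
          rw [if_pos le_top, if_pos (by exact_mod_cast Finset.le_sup (f := fun p => p.1.1) hp)]
    _ ≤ hitProbWithin P S N s := ENNReal.sum_le_tsum A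
    _ ≤ ⨆ n : ℕ, hitProbWithin P S n s := le_iSup (fun n : ℕ => hitProbWithin P S n s) N

theorem hitProbWithin_succ [Fintype Q] (hs : s ∉ S) (n : ℕ∞) :
    hitProbWithin P S (n + 1) s = ∑ q, ENNReal.ofReal (P s q) * hitProbWithin P S n q := by
  rw [hitProbWithin, ← (firstHitConsEquiv S s hs).tsum_eq, ENNReal.tsum_sigma', tsum_fintype]
  refine Finset.sum_congr rfl fun q _ => ?_
  rw [hitProbWithin, ← ENNReal.tsum_mul_left]
  refine tsum_congr fun p => ?_
  have hmeas : pathMeasENNReal P (consPath s p.1.2) (p.1.1 + 1)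
      = ENNReal.ofReal (P s q) * pathMeasENNReal P p.1.2 p.1.1 := by
    rw [pathMeasENNReal, Finset.prod_range_succ', mul_comm]
    simp only [consPath, p.2.1]
    rfl
  show (if ((p.1.1 + 1 : ℕ) : ℕ∞) ≤ n + 1
    then pathMeasENNReal P (consPath s p.1.2) (p.1.1 + 1) else 0) = _
  simp only [hmeas, Nat.cast_succ, ENat.add_le_add_iff_right ENat.one_ne_top, mul_ite, mul_zero]

theorem hitProbWithin_top_eq_sum [Fintype Q] (hs : s ∉ S) :
    hitProbWithin P S ⊤ s = ∑ q, ENNReal.ofReal (P s q) * hitProbWithin P S ⊤ q := by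
  simpa using hitProbWithin_succ (P := P) hs ⊤

theorem hitProbWithin_top_le_of_superharmonic [Fintype Q] {G : Q → ℝ≥0∞}
    (hS : ∀ s ∈ S, 1 ≤ G s) (hG : ∀ s ∉ S, ∑ q, ENNReal.ofReal (P s q) * G q ≤ G s) (s : Q) :
    hitProbWithin P S ⊤ s ≤ G s := by
  suffices h : ∀ n : ℕ, ∀ s, hitProbWithin P S n s ≤ G s by
    rw [hitProbWithin_top_eq_iSup]
    exact iSup_le fun n => h n s
  intro n
  induction n with
  | zero =>
    intro s
    by_cases hs : s ∈ S
    · exact (hitProbWithin_of_mem hs _).trans_le (hS s hs)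
    · simp [hitProbWithin_zero hs]
  | succ n ih =>
    intro s
    by_cases hs : s ∈ S
    · exact (hitProbWithin_of_mem hs _).trans_le (hS s hs)
    · rw [Nat.cast_succ, hitProbWithin_succ hs]
      exact (Finset.sum_le_sum fun q _ => by gcongr; exact ih q).trans (hG s hs)

theorem sum_ofReal_mul_eq_of_eq_one [Fintype Q] {p : Q → ℝ} {t : Q} (ht : p t = 1)
    (hne : ∀ q ≠ t, p q = 0) (G : Q → ℝ≥0∞) : ∑ q, ENNReal.ofReal (p q) * G q = G t := by
  rw [Finset.sum_eq_single t (fun q _ hq => by simp [hne q hq]) (by simp), ht,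
    ENNReal.ofReal_one, one_mul]

theorem hitProbWithin_top_iterate [Fintype Q] {f : Q → Q} {D : Set Q}
    (hD : ∀ σ ∈ D, σ ∉ S ∧ P σ (f σ) = 1 ∧ ∀ q ≠ f σ, P σ q = 0) :
    ∀ (k : ℕ) (x : Q), (∀ m < k, f^[m] x ∈ D) →
      hitProbWithin P S ⊤ x = hitProbWithin P S ⊤ (f^[k] x) := by
  intro k
  induction k with
  | zero => intro x _; rfl
  | succ k ih =>
    intro x hx
    obtain ⟨hxS, hx1, hx0⟩ := hD x (hx 0 k.succ_pos)
    rw [hitProbWithin_top_eq_sum hxS, sum_ofReal_mul_eq_of_eq_one hx1 hx0,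
      Function.iterate_succ_apply, ih (f x) fun m hm => hx (m + 1) (by omega)]

end HittingProbability

section Lumping

variable [Fintype Q] [DecidableEq Q]

theorem sum_ofReal_mul_eq_sum_comp_of_fiber {p p' : Q → ℝ} {π : Q → Q} (hp : ∀ q, 0 ≤ p q)
    (hfiber : ∀ g, p' g = ∑ q with π q = g, p q) (G : Q → ℝ≥0∞) :
    ∑ g, ENNReal.ofReal (p' g) * G g = ∑ q, ENNReal.ofReal (p q) * G (π q) := by
  calc ∑ g, ENNReal.ofReal (p' g) * G g
      = ∑ g, ∑ q with π q = g, ENNReal.ofReal (p q) * G (π q) := by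
        refine Finset.sum_congr rfl fun g _ => ?_
        rw [hfiber, ENNReal.ofReal_sum_of_nonneg fun q _ => hp q, Finset.sum_mul]
        exact Finset.sum_congr rfl fun q hq => by rw [(Finset.mem_filter.mp hq).2]
    _ = ∑ q, ENNReal.ofReal (p q) * G (π q) := Finset.sum_fiberwise _ _ _

theorem hitProbWithin_top_eq_of_lumping {P P' : Q → Q → ℝ} {S T : Set Q} {succ π : Q → Q}
    (hP : ∀ a b, 0 ≤ P a b)
    (hdet : ∀ σ ∈ T, σ ∉ S ∧ P σ (succ σ) = 1 ∧ ∀ q ≠ succ σ, P σ q = 0)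
    (hreach : ∀ σ ∈ T, ∃ k, succ^[k] σ = π σ ∧ ∀ m < k, succ^[m] σ ∈ T)
    (hπ_succ : ∀ σ ∈ T, π (succ σ) = π σ) (hπ_fix : ∀ s ∉ T, π s = s)
    (hlump : ∀ s ∉ T, ∀ g, P' s g = ∑ q with π q = g, P s q)
    (hP'T : ∀ σ ∈ T, ∀ g, P' σ g = 0) {s : Q} (hs : s ∉ T) :
    hitProbWithin P' S ⊤ s = hitProbWithin P S ⊤ s := by
  have hpush : ∀ s ∉ T, ∀ G : Q → ℝ≥0∞, ∑ g, ENNReal.ofReal (P' s g) * G g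
      = ∑ q, ENNReal.ofReal (P s q) * G (π q) := fun s hs =>
    sum_ofReal_mul_eq_sum_comp_of_fiber (hP s) (hlump s hs)
  have hπ_inv : ∀ q, hitProbWithin P S ⊤ (π q) = hitProbWithin P S ⊤ q := by
    intro q
    by_cases hq : q ∈ T
    · obtain ⟨k, hk, hkT⟩ := hreach q hq
      rw [← hk, hitProbWithin_top_iterate hdet k q hkT]
    · rw [hπ_fix q hq]
  have hS_T : ∀ s ∈ S, s ∉ T := fun s hsS hsT => (hdet s hsT).1 hsS
  apply le_antisymm
  · refine hitProbWithin_top_le_of_superharmonic (fun s hsS => (hitProbWithin_of_mem hsS _).ge)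
      (fun s hsS => ?_) s
    by_cases hsT : s ∈ T
    · simp [hP'T s hsT]
    · rw [hpush s hsT, hitProbWithin_top_eq_sum hsS]
      simp only [hπ_inv, le_refl]
  · calc hitProbWithin P S ⊤ s ≤ hitProbWithin P' S ⊤ (π s) :=
          hitProbWithin_top_le_of_superharmonic (G := fun q => hitProbWithin P' S ⊤ (π q))
            (fun s hsS => by rw [hπ_fix s (hS_T s hsS), hitProbWithin_of_mem hsS])
            (fun s hsS => ?_) s
      _ = hitProbWithin P' S ⊤ s := by rw [hπ_fix s hs]
    by_cases hsT : s ∈ T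
    · obtain ⟨-, h1, h0⟩ := hdet s hsT
      rw [sum_ofReal_mul_eq_of_eq_one h1 h0, hπ_succ s hsT]
    · rw [hπ_fix s hsT, hitProbWithin_top_eq_sum hsS, hpush s hsT]

end Lumping

theorem Function.iterate_first_mem_unique {α : Type*} {f : α → α} {A B : Set α}
    (hAB : ∀ x ∈ B, x ∉ A) {x : α} {k k' : ℕ} (hk : ∀ m < k, f^[m] x ∈ A) (hkB : f^[k] x ∈ B)
    (hk' : ∀ m < k', f^[m] x ∈ A) (hk'B : f^[k'] x ∈ B) : k = k' := by
  rcases lt_trichotomy k k' with h | h | h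
  exacts [absurd (hk' k h) (hAB _ hkB), h, absurd (hk k' h) (hAB _ hk'B)]

section Chains

variable {ι : Q} {Fire NF : Finset Q} {succ sucskip : Q → Q} {klen : Q → ℕ}

theorem sucskip_succ (hdisj : ∀ q ∈ Fire, q ∉ NF)
    (hskipF : ∀ f ∈ Fire, sucskip f = f ∧ klen f = 0)
    (hskipNF : ∀ σ ∈ NF, succ^[klen σ] σ = sucskip σ ∧ sucskip σ ∈ Fire ∧
      ∀ m < klen σ, succ^[m] σ ∈ NF)
    {σ : Q} (hσ : σ ∈ NF) (hsucc : succ σ ∈ Fire ∨ succ σ ∈ NF) :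
    sucskip (succ σ) = sucskip σ := by
  obtain ⟨hit, hfire, hNF⟩ : succ^[klen (succ σ)] (succ σ) = sucskip (succ σ) ∧
      sucskip (succ σ) ∈ Fire ∧ ∀ m < klen (succ σ), succ^[m] (succ σ) ∈ NF := by
    rcases hsucc with hF | hN
    · obtain ⟨hs, hk⟩ := hskipF _ hF
      exact ⟨by rw [hk, hs]; rfl, by rwa [hs], by simp [hk]⟩
    · exact hskipNF _ hN
  obtain ⟨hitσ, hfireσ, hNFσ⟩ := hskipNF σ hσ
  have hlen : klen σ = klen (succ σ) + 1 :=
    Function.iterate_first_mem_unique (A := NF) (B := Fire) hdisj hNFσ (hitσ ▸ hfireσ)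
      (fun m hm => by
        cases m with
        | zero => exact hσ
        | succ m => exact hNF m (by omega))
      (by rwa [Function.iterate_succ_apply, hit])
  rw [← hitσ, hlen, Function.iterate_succ_apply, hit]

theorem update_sucskip_succ [DecidableEq Q] {P : Q → Q → ℝ}
    (hpart : ∀ q : Q, q = ι ∨ q ∈ Fire ∨ q ∈ NF) (hιF : ι ∉ Fire) (hιNF : ι ∉ NF)
    (hdisj : ∀ q ∈ Fire, q ∉ NF) (hnoι : ∀ q, P q ι = 0)
    (hdet : ∀ σ ∈ NF, P σ (succ σ) = 1 ∧ ∀ q, q ≠ succ σ → P σ q = 0)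
    (hskipF : ∀ f ∈ Fire, sucskip f = f ∧ klen f = 0)
    (hskipNF : ∀ σ ∈ NF, succ^[klen σ] σ = sucskip σ ∧ sucskip σ ∈ Fire ∧
      ∀ m < klen σ, succ^[m] σ ∈ NF)
    {σ : Q} (hσ : σ ∈ NF) :
    Function.update sucskip ι ι (succ σ) = Function.update sucskip ι ι σ := by
  have hsucc : succ σ ∈ Fire ∨ succ σ ∈ NF :=
    (hpart (succ σ)).resolve_left fun h => by simpa [h, hnoι] using (hdet σ hσ).1
  have hsuccι : succ σ ≠ ι := hsucc.elim (fun h e => hιF (e ▸ h)) (fun h e => hιNF (e ▸ h))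
  rw [Function.update_of_ne hsuccι, Function.update_of_ne fun e : σ = ι => hιNF (e ▸ hσ),
    sucskip_succ hdisj hskipF hskipNF hσ hsucc]

theorem update_sucskip_of_notMem [DecidableEq Q] (hpart : ∀ q : Q, q = ι ∨ q ∈ Fire ∨ q ∈ NF)
    (hιF : ι ∉ Fire) (hfix : ∀ f ∈ Fire, sucskip f = f) {s : Q} (hs : s ∉ NF) :
    Function.update sucskip ι ι s = s := by
  rcases hpart s with rfl | hF | hN
  · exact Function.update_self ..
  · rw [Function.update_of_ne fun e : s = ι => hιF (e ▸ hF), hfix s hF]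
  · exact absurd hN hs

end Chains

section Reduction

variable [Fintype Q] [DecidableEq Q] {ι : Q} {Fire NF : Finset Q} {sucskip : Q → Q}
  {P P' : Q → Q → ℝ}

theorem filter_sucskip_eq_insert (hpart : ∀ q : Q, q = ι ∨ q ∈ Fire ∨ q ∈ NF)
    (hιF : ι ∉ Fire) (hιNF : ι ∉ NF) (hfix : ∀ f ∈ Fire, sucskip f = f) {g : Q}
    (hg : g ∈ Fire) :
    Finset.univ.filter (fun q => q ≠ ι ∧ sucskip q = g) = insert g (NF.filter (sucskip · = g)) := by
  ext q
  simp only [Finset.mem_filter, Finset.mem_univ, true_and, Finset.mem_insert]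
  constructor
  · rintro ⟨hq, hqg⟩
    rcases hpart q with h | h | h
    exacts [absurd h hq, .inl (hqg ▸ (hfix q h).symm), .inr ⟨h, hqg⟩]
  · rintro (rfl | ⟨hq, hqg⟩)
    · exact ⟨fun h => hιF (h ▸ hg), hfix q hg⟩
    · exact ⟨fun h => hιNF (h ▸ hq), hqg⟩

theorem reduction_row_eq_sum_fiber (hpart : ∀ q : Q, q = ι ∨ q ∈ Fire ∨ q ∈ NF)
    (hιF : ι ∉ Fire) (hιNF : ι ∉ NF) (hdisj : ∀ q ∈ Fire, q ∉ NF) (hnoι : ∀ q, P q ι = 0)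
    (hfix : ∀ f ∈ Fire, sucskip f = f) (hskip : ∀ q ≠ ι, sucskip q ∈ Fire)
    (hP'ι : ∀ f ∈ Fire,
      P' ι f = P ι f + ∑ σ ∈ NF.filter (fun σ => sucskip σ = f), P ι σ)
    (hP'ff : ∀ f₁ ∈ Fire, ∀ f₂ ∈ Fire,
      P' f₁ f₂ = ∑ q ∈ Finset.univ.filter (fun q => q ≠ ι ∧ sucskip q = f₂), P f₁ q)
    (hP'z : ∀ q q', q ∈ NF ∨ q' ∈ NF → P' q q' = 0) (hP'noι : ∀ q, P' q ι = 0)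
    (s : Q) (hs : s ∉ NF) (g : Q) :
    P' s g = ∑ q with Function.update sucskip ι ι q = g, P s q := by
  have hπ : ∀ q ≠ ι, Function.update sucskip ι ι q = sucskip q := fun q hq =>
    Function.update_of_ne hq _ _
  rcases hpart g with hgι | hg | hg
  · rw [hgι]
    have hfiber : Finset.univ.filter (fun q => Function.update sucskip ι ι q = ι) = {ι} := by
      ext q
      simp only [Finset.mem_filter, Finset.mem_univ, true_and, Finset.mem_singleton]
      refine ⟨fun hq => by_contra fun hne => hιF ?_, fun hq => hq ▸ Function.update_self ..⟩
      exact hq ▸ hπ q hne ▸ hskip q hne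
    rw [hfiber, Finset.sum_singleton, hP'noι, hnoι]
  · have hfiber : Finset.univ.filter (fun q => Function.update sucskip ι ι q = g)
        = Finset.univ.filter (fun q => q ≠ ι ∧ sucskip q = g) := by
      ext q
      by_cases hq : q = ι
      · subst hq
        simpa using fun h : q = g => hιF (h ▸ hg)
      · simp [hq]
    rw [hfiber]
    rcases hpart s with rfl | hsF | hsNF
    · rw [hP'ι g hg, filter_sucskip_eq_insert hpart hιF hιNF hfix hg, Finset.sum_insert]
      exact fun h => hdisj g hg (Finset.mem_filter.mp h).1
    · exact hP'ff s hsF g hg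
    · exact absurd hsNF hs
  · refine (hP'z s g (.inr hg)).trans (Finset.sum_eq_zero fun q hq => absurd hg ?_).symm
    rw [← (Finset.mem_filter.mp hq).2]
    by_cases hqι : q = ι
    · rw [hqι, Function.update_self]
      exact hιNF
    · rw [hπ q hqι]
      exact hdisj _ (hskip q hqι)

end Reduction

theorem reduction_preserves_reachability_general (Q : Type) [Fintype Q] [DecidableEq Q]
    (ι : Q) (Fire NF synch : Finset Q)
    (succ sucskip : Q → Q) (klen : Q → ℕ) (P P' : Q → Q → ℝ)
    (hpart : ∀ q : Q, q = ι ∨ q ∈ Fire ∨ q ∈ NF)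
    (hιF : ι ∉ Fire) (hιNF : ι ∉ NF) (hdisj : ∀ q ∈ Fire, q ∉ NF)
    (hsynch : synch ⊆ Fire)
    (hPnn : ∀ q q', 0 ≤ P q q')
    (hnoι : ∀ q, P q ι = 0)
    (hdet : ∀ σ ∈ NF, P σ (succ σ) = 1 ∧ ∀ q, q ≠ succ σ → P σ q = 0)
    (hskipF : ∀ f ∈ Fire, sucskip f = f ∧ klen f = 0)
    (hskipNF : ∀ σ ∈ NF, succ^[klen σ] σ = sucskip σ ∧ sucskip σ ∈ Fire ∧
      ∀ m < klen σ, succ^[m] σ ∈ NF)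
    (hP'ι : ∀ f ∈ Fire,
      P' ι f = P ι f + ∑ σ ∈ NF.filter (fun σ => sucskip σ = f), P ι σ)
    (hP'ff : ∀ f₁ ∈ Fire, ∀ f₂ ∈ Fire,
      P' f₁ f₂ = ∑ q ∈ Finset.univ.filter (fun q => q ≠ ι ∧ sucskip q = f₂), P f₁ q)
    (hP'z : ∀ q q', q ∈ NF ∨ q' ∈ NF → P' q q' = 0)
    (hP'noι : ∀ q, P' q ι = 0) :
    reachProb P ι ↑synch = reachProb P' ι ↑synch := by
  have hne : ∀ σ ∈ NF, σ ≠ ι := fun σ hσ h => hιNF (h ▸ hσ)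
  have hskip : ∀ q ≠ ι, sucskip q ∈ Fire := fun q hq => by
    rcases (hpart q).resolve_left hq with hF | hN
    exacts [by rwa [(hskipF q hF).1], (hskipNF q hN).2.1]
  have hrow := reduction_row_eq_sum_fiber hpart hιF hιNF hdisj hnoι (fun f hf => (hskipF f hf).1)
    hskip hP'ι hP'ff hP'z hP'noι
  have hP'nn : ∀ q q', 0 ≤ P' q q' := fun q q' => by
    by_cases hq : q ∈ NF
    · exact (hP'z q q' (.inl hq)).ge
    · exact (hrow q hq q').symm ▸ Finset.sum_nonneg fun _ _ => hPnn _ _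
  rw [reachProb_eq_toReal_hitProbWithin hPnn, reachProb_eq_toReal_hitProbWithin hP'nn,
    hitProbWithin_top_eq_of_lumping (T := NF) hPnn
      (fun σ hσ => ⟨fun h => hdisj σ (hsynch h) hσ, hdet σ hσ⟩)
      (fun σ hσ => ⟨klen σ, by rw [Function.update_of_ne (hne σ hσ)]; exact (hskipNF σ hσ).1,
        (hskipNF σ hσ).2.2⟩)
      (fun σ hσ => update_sucskip_succ hpart hιF hιNF hdisj hnoι hdet hskipF hskipNF hσ)
      (fun s hs => update_sucskip_of_notMem hpart hιF (fun f hf => (hskipF f hf).1) hs)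
      hrow (fun σ hσ g => hP'z σ g (.inl hσ)) hιNF]

/-- Reachability preservation under reduction of deterministic chains: if every
non-firing state of the DTMC D transitions with probability 1 to its unique
successor, and D′ collapses these maximal deterministic chains (aggregating the
initial transitions into each firing state over its deterministic predecessors,
and the transitions between firing states over the removed chains), then the
probability of eventually reaching any target set of firing states from the
initial state is the same in D and D′. -/
theorem reduction_preserves_reachability (Q : Type) [Fintype Q] [DecidableEq Q]
    (ι : Q) (Fire NF synch : Finset Q)
    (succ sucskip : Q → Q) (klen : Q → ℕ) (P P' : Q → Q → ℝ)
    (hpart : ∀ q : Q, q = ι ∨ q ∈ Fire ∨ q ∈ NF)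
    (hιF : ι ∉ Fire) (hιNF : ι ∉ NF) (hdisj : ∀ q ∈ Fire, q ∉ NF)
    (hsynch : synch ⊆ Fire)
    (hPnn : ∀ q q', 0 ≤ P q q') (hProw : ∀ q, ∑ q', P q q' = 1)
    (hnoι : ∀ q, P q ι = 0)
    (hdet : ∀ σ ∈ NF, P σ (succ σ) = 1 ∧ ∀ q, q ≠ succ σ → P σ q = 0)
    (hskipF : ∀ f ∈ Fire, sucskip f = f ∧ klen f = 0)
    (hskipNF : ∀ σ ∈ NF, succ^[klen σ] σ = sucskip σ ∧ sucskip σ ∈ Fire ∧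
      ∀ m < klen σ, succ^[m] σ ∈ NF)
    (hP'ι : ∀ f ∈ Fire,
      P' ι f = P ι f + ∑ σ ∈ NF.filter (fun σ => sucskip σ = f), P ι σ)
    (hP'ff : ∀ f₁ ∈ Fire, ∀ f₂ ∈ Fire,
      P' f₁ f₂ = ∑ q ∈ Finset.univ.filter (fun q => q ≠ ι ∧ sucskip q = f₂), P f₁ q)
    (hP'z : ∀ q q', q ∈ NF ∨ q' ∈ NF → P' q q' = 0)
    (hP'noι : ∀ q, P' q ι = 0) :
    reachProb P ι ↑synch = reachProb P' ι ↑synch :=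
  reduction_preserves_reachability_general Q ι Fire NF synch succ sucskip klen P P' hpart hιF hιNF
    hdisj hsynch hPnn hnoι hdet hskipF hskipNF hP'ι hP'ff hP'z hP'noι
end

section
/- In the construction of failure vectors, if the perturbation function α ↦ pert(Φ, α, ε) is increasing in Φ and oscillators at phase Φ do not fire under a given partial failure assignment, then oscillators at every phase Ψ < Φ also do not fire; consequently every failure vector produced by fail_T satisfies the well-formedness condition that f_i = ★ implies f_j = ★ for all j ≤ i. -/
/-! The count `α^Φ` only changes at phases carrying a failure entry, so it is constant across a
run of ★ entries. Below such a run the update value can therefore only decrease, by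
monotonicity of `pert` and `ref`, and a non-firing phase stays non-firing further down. In a
failure vector of `failSet` non-firing phases carry ★, so ★ propagates downwards. -/

section

variable {T : ℕ} {pert ref : ℕ → ℕ → ℕ} {σ : ℕ → ℕ} {F : ℕ → Option ℕ}

lemma alphaF_succ_of_none {Φ : ℕ} (hF : F (Φ + 1) = none) :
    alphaF T pert ref σ F Φ = alphaF T pert ref σ F (Φ + 1) := by
  by_cases hT : T ≤ Φ
  · rw [alphaF, dif_pos hT, alphaF, dif_pos (by omega)]
  · rw [alphaF, dif_neg hT, hF]

lemma alphaF_eq_of_forall_none {Ψ Φ : ℕ} (hle : Ψ ≤ Φ)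
    (hF : ∀ x, Ψ < x → x ≤ Φ → F x = none) :
    alphaF T pert ref σ F Ψ = alphaF T pert ref σ F Φ := by
  induction Φ, hle using Nat.le_induction with
  | base => rfl
  | succ Φ hΨΦ ih =>
    rw [ih fun x hΨx hxΦ => hF x hΨx (by omega),
      alphaF_succ_of_none (hF (Φ + 1) (by omega) le_rfl)]

lemma updateF_le_of_forall_none (hpert : ∀ Φ Ψ a, Ψ ≤ Φ → pert Ψ a ≤ pert Φ a)
    (href : ∀ Φ Ψ d e, Ψ ≤ Φ → d ≤ e → ref Ψ d ≤ ref Φ e) {Ψ Φ : ℕ} (hle : Ψ ≤ Φ)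
    (hF : ∀ x, Ψ < x → x ≤ Φ → F x = none) :
    updateF T pert ref σ F Ψ ≤ updateF T pert ref σ F Φ := by
  unfold updateF
  rw [alphaF_eq_of_forall_none hle hF]
  exact Nat.add_le_add_left (href _ _ _ _ hle (hpert _ _ _ hle)) 1

lemma not_lt_updateF_of_forall_none (hpert : ∀ Φ Ψ a, Ψ ≤ Φ → pert Ψ a ≤ pert Φ a)
    (href : ∀ Φ Ψ d e, Ψ ≤ Φ → d ≤ e → ref Ψ d ≤ ref Φ e) {Ψ Φ : ℕ} (hle : Ψ ≤ Φ)
    (hF : ∀ x, Ψ < x → x ≤ Φ → F x = none) (hΦ : ¬ T < updateF T pert ref σ F Φ) :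
    ¬ T < updateF T pert ref σ F Ψ := fun hΨ =>
  hΦ (hΨ.trans_le (updateF_le_of_forall_none hpert href hle hF))

lemma not_lt_updateF_of_mem_failSet (hF : F ∈ failSet T pert ref σ) {Φ : ℕ} (h1Φ : 1 ≤ Φ)
    (hΦT : Φ ≤ T) (hΦ : F Φ = none) : ¬ T < updateF T pert ref σ F Φ := fun hfire => by
  obtain ⟨f, hf, -⟩ := (hF.1 Φ h1Φ hΦT).1 hfire
  simp [hΦ] at hf

lemma eq_none_of_le_of_mem_failSet (hpert : ∀ Φ Ψ a, Ψ ≤ Φ → pert Ψ a ≤ pert Φ a)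
    (href : ∀ Φ Ψ d e, Ψ ≤ Φ → d ≤ e → ref Ψ d ≤ ref Φ e) (hF : F ∈ failSet T pert ref σ)
    {i j : ℕ} (hji : j ≤ i) (hiT : i ≤ T) (hi : F i = none) : F j = none := by
  suffices ∀ x, j ≤ x → x ≤ i → F x = none from this j le_rfl hji
  induction hji using Nat.decreasingInduction with
  | self => exact fun x hix hxi => le_antisymm hxi hix ▸ hi
  | of_succ k hki ih =>
    intro x hkx hxi
    rcases hkx.eq_or_lt with rfl | hkx
    · rcases Nat.eq_zero_or_pos k with rfl | hk
      · exact hF.2 0 (Or.inl rfl)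
      · have hi_off := not_lt_updateF_of_mem_failSet hF (hk.trans_le hki.le) hiT hi
        exact (hF.1 k hk (by omega)).2 (not_lt_updateF_of_forall_none hpert href hki.le ih hi_off)
    · exact ih x hkx hxi

end

/-- If the perturbation function is increasing in the phase and the refractory
function is monotone, then whenever oscillators at phase Φ do not fire and all
entries of the failure vector strictly between Ψ and Φ (inclusive of Φ's
successors' range) are ★, oscillators at every phase Ψ ≤ Φ do not fire either.
Consequently every failure vector in `failSet` is well formed: a ★ entry forces
★ at all lower phases (within {1,…,T}). -/
theorem failure_vectors_well_formed (T : ℕ) (pert ref : ℕ → ℕ → ℕ) (σ : ℕ → ℕ)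
    (hpert : ∀ Φ Ψ a, Ψ ≤ Φ → pert Ψ a ≤ pert Φ a)
    (href : ∀ Φ Ψ d e, Ψ ≤ Φ → d ≤ e → ref Ψ d ≤ ref Φ e) :
    (∀ (F : ℕ → Option ℕ) (Φ Ψ : ℕ), Ψ ≤ Φ →
        (∀ x, Ψ < x → x ≤ Φ → F x = none) →
        ¬ T < updateF T pert ref σ F Φ →
        ¬ T < updateF T pert ref σ F Ψ) ∧
    (∀ F ∈ failSet T pert ref σ, ∀ i j, 1 ≤ j → j ≤ i → i ≤ T →
        F i = none → F j = none) :=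
  ⟨fun _ _ _ => not_lt_updateF_of_forall_none hpert href,
    fun _ hF _ _ _ => eq_none_of_le_of_mem_failSet hpert href hF⟩
end
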